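/- Let A and B be abelian von Neumann algebras and f : A → B a unital *-ring homomorphism, i.e., f(1) = 1, f(a*) = f(a)*, f(a+b) = f(a) + f(b), and f(ab) = f(a)f(b) for all a, b ∈ A. Then ‖f(a)‖ ≤ ‖a‖ for all a ∈ A, and f is the direct sum of a *-homomorphism and a conjugate *-homomorphism: there exist projections q₁, q₂ ∈ B with q₁ + q₂ = 1 such that a ↦ f(a)q₁ is a ℂ-linear *-homomorphism from A into Bq₁ and a ↦ f(a)q₂ is a conjugate-linear *-homomorphism from A into Bq₂. -/

import Mathlib

/-!
A star ring homomorphism `φ` maps `star a * a` to `star (φ a) * φ a`, so it is monotone; being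
unital and additive it fixes rational multiples of `1`, so `0 ≤ a ≤ q` forces `‖φ a‖ ≤ q`, and the
C⋆-identity extends `‖φ a‖ ≤ ‖a‖` to all `a`. A contractive additive map is continuous, hence
`ℝ`-linear. Then `u = φ (I • 1)` is a skew-adjoint square root of `-1` commuting with the range of
`φ`, and `φ (c • a) = re c • φ a + im c • u * φ a`; on the spectral projections of `u` for the
eigenvalues `I` and `-I` this is `c • φ a` and `conj c • φ a` respectively.
-/

noncomputable section

namespace Stmt7

variable {H H' : Type*} [NormedAddCommGroup H] [InnerProductSpace ℂ H] [CompleteSpace H]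
  [NormedAddCommGroup H'] [InnerProductSpace ℂ H'] [CompleteSpace H']

lemma map_algebraMap_ratCast {A B F : Type*} [Ring A] [Ring B] [Algebra ℝ A] [Algebra ℝ B]
    [FunLike F A B] [AddMonoidHomClass F A B] (φ : F) (hφ : φ 1 = 1) (q : ℚ) :
    φ (algebraMap ℝ A q) = algebraMap ℝ B q := by
  simpa [Algebra.algebraMap_eq_smul_one, hφ] using map_ratCast_smul φ ℝ ℝ q (1 : A)

section CStarAlgebra

variable {A B : Type*} [CStarAlgebra A] [PartialOrder A] [StarOrderedRing A]
  [CStarAlgebra B] [PartialOrder B] [StarOrderedRing B]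

lemma norm_map_le_of_nonneg (φ : A →⋆ₙ+* B) (hφ : φ 1 = 1) {a : A} (ha : 0 ≤ a) :
    ‖φ a‖ ≤ ‖a‖ := by
  have hφa : 0 ≤ φ a := map_zero φ ▸ OrderHomClass.mono φ ha
  refine le_of_forall_lt_rat_imp_le fun q hq => ?_
  have hq0 : (0 : ℝ) ≤ q := (norm_nonneg a).trans hq.le
  rw [CStarAlgebra.norm_le_iff_le_algebraMap _ hq0 hφa, ← map_algebraMap_ratCast φ hφ]
  exact OrderHomClass.mono φ ((CStarAlgebra.norm_le_iff_le_algebraMap a hq0 ha).mp hq.le)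

lemma norm_map_le (φ : A →⋆ₙ+* B) (hφ : φ 1 = 1) (a : A) : ‖φ a‖ ≤ ‖a‖ := by
  have h := norm_map_le_of_nonneg φ hφ (star_mul_self_nonneg a)
  rw [map_mul, map_star, CStarRing.norm_star_mul_self, CStarRing.norm_star_mul_self] at h
  exact (mul_self_le_mul_self_iff (norm_nonneg _) (norm_nonneg _)).mpr h

lemma map_ofReal_smul (φ : A →⋆ₙ+* B) (hφ : φ 1 = 1) (t : ℝ) (a : A) :
    φ ((t : ℂ) • a) = (t : ℂ) • φ a := by
  have hcont : Continuous φ := AddMonoidHomClass.continuous_of_bound φ 1 fun a =>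
    (one_mul ‖a‖).symm ▸ norm_map_le φ hφ a
  simpa only [Complex.coe_smul] using map_real_smul φ hcont t a

end CStarAlgebra

section Involution

open Complex

variable {B : Type*} [Ring B] [Algebra ℂ B]

lemma isStarProjection_half_one_sub [StarRing B] [StarModule ℂ B] {v : B} (hv : v * v = 1)
    (hv' : IsSelfAdjoint v) : IsStarProjection ((2⁻¹ : ℂ) • (1 - v)) := by
  refine ⟨?_, (IsSelfAdjoint.ofNat 2).inv₀.smul ((IsSelfAdjoint.one B).sub hv')⟩
  have : (1 - v) * (1 - v) = (2 : ℂ) • (1 - v) := by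
    rw [two_smul, sub_mul, mul_sub, mul_sub, hv]; noncomm_ring
  rw [IsIdempotentElem, smul_mul_smul_comm, this, smul_smul]
  norm_num

lemma isSelfAdjoint_I_smul [StarRing B] [StarModule ℂ B] {u : B} (hu : star u = -u) :
    IsSelfAdjoint (I • u) := by
  rw [IsSelfAdjoint, star_smul, hu, RCLike.star_def, conj_I, smul_neg, neg_smul, neg_neg]

lemma I_smul_mul_I_smul {u : B} (hu : u * u = -1) : (I • u) * (I • u) = 1 := by
  rw [smul_mul_smul_comm, hu, I_mul_I, neg_one_smul, neg_neg]

lemma mul_half_one_sub_I_smul {u : B} (hu : u * u = -1) :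
    u * (2⁻¹ : ℂ) • (1 - I • u) = I • (2⁻¹ : ℂ) • (1 - I • u) := by
  rw [mul_smul_comm, mul_sub, mul_one, mul_smul_comm, hu]
  match_scalars <;> grind [I_sq]

lemma mul_one_sub_half_one_sub_I_smul {u : B} (hu : u * u = -1) :
    u * (1 - (2⁻¹ : ℂ) • (1 - I • u)) = (-I) • (1 - (2⁻¹ : ℂ) • (1 - I • u)) := by
  rw [mul_sub, mul_one, mul_half_one_sub_I_smul hu]
  match_scalars <;> grind [I_sq]

end Involution

section RangeCommute

variable {R S : Type*} [NonUnitalNonAssocSemiring R] [Star R] [NonUnitalSemiring S] [StarMul S]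
  (φ : R →⋆ₙ+* S) {q : S}

lemma map_mul_mul_of_commute (hq : IsIdempotentElem q) (hqφ : ∀ b, Commute q (φ b)) (a b : R) :
    φ (a * b) * q = φ a * q * (φ b * q) := by
  rw [map_mul, mul_assoc (φ a) q, ← mul_assoc q, (hqφ b).eq, mul_assoc (φ b), hq.eq, mul_assoc]

lemma map_star_mul_of_commute (hq : IsSelfAdjoint q) (hqφ : ∀ a, Commute q (φ a)) (a : R) :
    φ (star a) * q = star (φ a * q) := by
  rw [map_star, star_mul, hq.star_eq]
  exact (hq.star_eq ▸ (hqφ a).star_star : Commute q (star (φ a))).eq.symm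

end RangeCommute

section Decomposition

open Complex

variable {R S : Type*} [Ring R] [StarRing R] [Algebra ℂ R] [Ring S] [StarRing S]
  (φ : R →⋆ₙ+* S)

lemma map_I_smul_one_mul_self (hφ : φ 1 = 1) : φ (I • 1) * φ (I • 1) = -1 := by
  rw [← map_mul, smul_mul_smul_comm, one_mul, I_mul_I, neg_one_smul, map_neg, hφ]

lemma star_map_I_smul_one [StarModule ℂ R] : star (φ (I • 1)) = -φ (I • 1) := by
  rw [← map_star, star_smul, star_one, RCLike.star_def, conj_I, neg_smul, map_neg]

lemma commute_map_I_smul_one (a : R) : Commute (φ (I • 1)) (φ a) :=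
  ((Commute.one_left a).smul_left I).map φ

variable [Algebra ℂ S]

lemma map_smul_eq_re_add_im (hℝ : ∀ (t : ℝ) (a : R), φ ((t : ℂ) • a) = (t : ℂ) • φ a)
    (c : ℂ) (a : R) : φ (c • a) = (c.re : ℂ) • φ a + (c.im : ℂ) • (φ (I • 1) * φ a) := by
  have hI : φ (I • a) = φ (I • 1) * φ a := by rw [← map_mul, smul_one_mul]
  conv_lhs => rw [← re_add_im c, add_smul, mul_smul]
  rw [map_add, hℝ, hℝ, hI]

lemma map_smul_mul_of_mul_eq_smul (hℝ : ∀ (t : ℝ) (a : R), φ ((t : ℂ) • a) = (t : ℂ) • φ a)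
    {q : S} {w : ℂ} (hq : φ (I • 1) * q = w • q) (c : ℂ) (a : R) :
    φ (c • a) * q = ((c.re : ℂ) + c.im * w) • (φ a * q) := by
  rw [map_smul_eq_re_add_im φ hℝ, add_mul, smul_mul_assoc, smul_mul_assoc,
    (commute_map_I_smul_one φ a).eq, mul_assoc, hq, mul_smul_comm, smul_smul, add_smul]

/-- The spectral projection of `φ (I • 1)` for the eigenvalue `I`. -/
def linearPart : S := (2⁻¹ : ℂ) • (1 - I • φ (I • 1))

lemma isStarProjection_linearPart [StarModule ℂ R] [StarModule ℂ S] (hφ : φ 1 = 1) :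
    IsStarProjection (linearPart φ) :=
  isStarProjection_half_one_sub (I_smul_mul_I_smul (map_I_smul_one_mul_self φ hφ))
    (isSelfAdjoint_I_smul (star_map_I_smul_one φ))

lemma commute_linearPart (a : R) : Commute (linearPart φ) (φ a) :=
  ((Commute.one_left _).sub_left ((commute_map_I_smul_one φ a).smul_left I)).smul_left _

lemma map_smul_mul_linearPart (hφ : φ 1 = 1)
    (hℝ : ∀ (t : ℝ) (a : R), φ ((t : ℂ) • a) = (t : ℂ) • φ a) (c : ℂ) (a : R) :
    φ (c • a) * linearPart φ = c • (φ a * linearPart φ) := by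
  rw [linearPart, map_smul_mul_of_mul_eq_smul φ hℝ
    (mul_half_one_sub_I_smul (map_I_smul_one_mul_self φ hφ)), re_add_im]

lemma map_smul_mul_one_sub_linearPart (hφ : φ 1 = 1)
    (hℝ : ∀ (t : ℝ) (a : R), φ ((t : ℂ) • a) = (t : ℂ) • φ a) (c : ℂ) (a : R) :
    φ (c • a) * (1 - linearPart φ) = starRingEnd ℂ c • (φ a * (1 - linearPart φ)) := by
  rw [linearPart, map_smul_mul_of_mul_eq_smul φ hℝ
    (mul_one_sub_half_one_sub_I_smul (map_I_smul_one_mul_self φ hφ))]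
  congr 1
  apply Complex.ext <;> simp

end Decomposition

def restrictStarRingHom (A : VonNeumannAlgebra H) (f : (H →L[ℂ] H) → (H' →L[ℂ] H'))
    (hstar : ∀ a ∈ A, f (star a) = star (f a))
    (hadd : ∀ a ∈ A, ∀ b ∈ A, f (a + b) = f a + f b)
    (hmul : ∀ a ∈ A, ∀ b ∈ A, f (a * b) = f a * f b) :
    A.toStarSubalgebra →⋆ₙ+* (H' →L[ℂ] H') where
  toFun a := f a
  map_mul' a b := hmul a a.2 b b.2
  map_add' a b := hadd a a.2 b b.2
  map_zero' := by simpa using hadd 0 (zero_mem A) 0 (zero_mem A)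
  map_star' a := hstar a a.2

theorem stmt7 (A : VonNeumannAlgebra H) (B : VonNeumannAlgebra H')
    (f : (H →L[ℂ] H) → (H' →L[ℂ] H'))
    (hmaps : ∀ a ∈ A, f a ∈ B)
    (hone : f 1 = 1)
    (hstar : ∀ a ∈ A, f (star a) = star (f a))
    (hadd : ∀ a ∈ A, ∀ b ∈ A, f (a + b) = f a + f b)
    (hmul : ∀ a ∈ A, ∀ b ∈ A, f (a * b) = f a * f b) :
    (∀ a ∈ A, ‖f a‖ ≤ ‖a‖) ∧
    ∃ q₁ q₂ : H' →L[ℂ] H', q₁ ∈ B ∧ q₂ ∈ B ∧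
      q₁ * q₁ = q₁ ∧ star q₁ = q₁ ∧ q₂ * q₂ = q₂ ∧ star q₂ = q₂ ∧ q₁ + q₂ = 1 ∧
      (∀ (c : ℂ), ∀ a ∈ A, f (c • a) * q₁ = c • (f a * q₁)) ∧
      (∀ a ∈ A, ∀ b ∈ A, f (a + b) * q₁ = f a * q₁ + f b * q₁ ∧
        f (a * b) * q₁ = (f a * q₁) * (f b * q₁)) ∧
      (∀ a ∈ A, f (star a) * q₁ = star (f a * q₁)) ∧
      (∀ (c : ℂ), ∀ a ∈ A, f (c • a) * q₂ = (starRingEnd ℂ c) • (f a * q₂)) ∧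
      (∀ a ∈ A, ∀ b ∈ A, f (a + b) * q₂ = f a * q₂ + f b * q₂ ∧
        f (a * b) * q₂ = (f a * q₂) * (f b * q₂)) ∧
      (∀ a ∈ A, f (star a) * q₂ = star (f a * q₂)) := by
  have : IsClosed (A.toStarSubalgebra : Set (H →L[ℂ] H)) :=
    A.centralizer_centralizer ▸ Set.isClosed_centralizer _
  -- any order making `A` a star-ordered ring will do
  let := CStarAlgebra.spectralOrder A.toStarSubalgebra
  have := CStarAlgebra.spectralOrderedRing A.toStarSubalgebra
  set φ := restrictStarRingHom A f hstar hadd hmul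
  have hφ : φ 1 = 1 := hone
  set p := linearPart φ
  have hp : IsStarProjection p := isStarProjection_linearPart φ hφ
  have hp' : IsStarProjection (1 - p) := hp.one_sub
  have hpB : p ∈ B := B.toStarSubalgebra.smul_mem (sub_mem (one_mem B)
    (B.toStarSubalgebra.smul_mem (hmaps _ (A.toStarSubalgebra.smul_mem (one_mem A) _)) _)) _
  have hpφ (a) : Commute p (φ a) := commute_linearPart φ a
  have hpφ' (a) : Commute (1 - p) (φ a) := (Commute.one_left _).sub_left (hpφ a)
  have hadd' (q) : ∀ a ∈ A, ∀ b ∈ A, f (a + b) * q = f a * q + f b * q := fun a ha b hb => by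
    rw [hadd a ha b hb, add_mul]
  refine ⟨fun a ha => norm_map_le φ hφ ⟨a, ha⟩, p, 1 - p, hpB, sub_mem (one_mem B) hpB,
    hp.isIdempotentElem, hp.isSelfAdjoint, hp'.isIdempotentElem, hp'.isSelfAdjoint,
    add_sub_cancel p 1,
    fun c a ha => map_smul_mul_linearPart φ hφ (map_ofReal_smul φ hφ) c ⟨a, ha⟩,
    fun a ha b hb => ⟨hadd' p a ha b hb,
      map_mul_mul_of_commute φ hp.isIdempotentElem hpφ ⟨a, ha⟩ ⟨b, hb⟩⟩,
    fun a ha => map_star_mul_of_commute φ hp.isSelfAdjoint hpφ ⟨a, ha⟩,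
    fun c a ha => map_smul_mul_one_sub_linearPart φ hφ (map_ofReal_smul φ hφ) c ⟨a, ha⟩,
    fun a ha b hb => ⟨hadd' (1 - p) a ha b hb,
      map_mul_mul_of_commute φ hp'.isIdempotentElem hpφ' ⟨a, ha⟩ ⟨b, hb⟩⟩,
    fun a ha => map_star_mul_of_commute φ hp'.isSelfAdjoint hpφ' ⟨a, ha⟩⟩

end Stmt7
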